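/- Any continuous solution x of the loaded Volterra integral equation can be reconstructed from its load vector: for all t ∈ [t₀,T], x(t) = F(t,λ) − Σ_{j=1}^{m−1} b_j(t,λ) x(t_j). -/

import Mathlib

/-!
Moving the loads to the right-hand side, `x` solves the plain Volterra equation `x = g + λ V_K x`
with `g = f - ∑ⱼ aⱼ x(tⱼ)`. Fubini on the triangle `s ≤ t` gives `V_K ∘ V_{Kₙ} = V_{Kₙ₊₁}`, so
iterating yields `x = g + ∑_{n<N} λⁿ⁺¹ V_{Kₙ₊₁} g + λᴺ⁺¹ V_{K_{N+1}} x`. The bound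
`|Kₙ₊₁(t,s)| ≤ Mⁿ⁺¹ (t-s)ⁿ / n!` kills the remainder and lets the series pass under the integral
(dominated convergence), so `x = g + ∫ R g`; this integral is linear in `f` and the `aⱼ`, which
produces `F` and the `bⱼ`. The data, continuous only on `[t₀, t]` and on the triangle, are first
extended to continuous functions on `ℝ` and `ℝ²` (Tietze).
-/

open MeasureTheory Set Function Filter Topology
open scoped Nat Interval

theorem ContinuousOn.exists_continuous_eqOn {X : Type*} [TopologicalSpace X] [NormalSpace X]
    {s : Set X} {f : X → ℝ} (hf : ContinuousOn f s) (hs : IsClosed s) :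
    ∃ g : X → ℝ, Continuous g ∧ EqOn g f s := by
  obtain ⟨g, hg⟩ := ContinuousMap.exists_restrict_eq hs ⟨s.domRestrict f, hf.domRestrict⟩
  exact ⟨g, g.continuous, fun x hx => congrArg (· ⟨x, hx⟩) hg⟩

theorem exists_continuous_eq_on_triangle {K : ℝ → ℝ → ℝ} {a b : ℝ}
    (hK : ContinuousOn (uncurry K) {q : ℝ × ℝ | a ≤ q.2 ∧ q.2 ≤ q.1 ∧ q.1 ≤ b}) :
    ∃ k : ℝ → ℝ → ℝ, Continuous (uncurry k) ∧
      ∀ u s, a ≤ s → s ≤ u → u ≤ b → k u s = K u s := by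
  obtain ⟨k, hk, hkK⟩ := hK.exists_continuous_eqOn <|
    (isClosed_le continuous_const continuous_snd).inter
      ((isClosed_le continuous_snd continuous_fst).inter
        (isClosed_le continuous_fst continuous_const))
  exact ⟨curry k, by rwa [uncurry_curry],
    fun u s h₁ h₂ h₃ => hkK (show (u, s) ∈ _ from ⟨h₁, h₂, h₃⟩)⟩

theorem integral_mul_sub_sum_mul {ι : Type*} (S : Finset ι) {r f : ℝ → ℝ} {a : ι → ℝ → ℝ}
    (c : ι → ℝ) {α β : ℝ} (hr : ContinuousOn r (uIcc α β)) (hf : ContinuousOn f (uIcc α β))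
    (ha : ∀ i ∈ S, ContinuousOn (a i) (uIcc α β)) :
    ∫ s in α..β, r s * (f s - ∑ i ∈ S, a i s * c i) =
      (∫ s in α..β, r s * f s) - ∑ i ∈ S, (∫ s in α..β, r s * a i s) * c i := by
  have hra : ∀ i ∈ S, IntervalIntegrable (fun s => r s * (a i s * c i)) volume α β :=
    fun i hi => (hr.mul ((ha i hi).mul continuousOn_const)).intervalIntegrable
  simp only [mul_sub, Finset.mul_sum]
  rw [intervalIntegral.integral_sub (f := fun s => r s * f s)
      (g := fun s => ∑ i ∈ S, r s * (a i s * c i)) (hr.mul hf).intervalIntegrable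
      (continuousOn_finsetSum S fun i hi =>
        hr.mul ((ha i hi).mul continuousOn_const)).intervalIntegrable,
    intervalIntegral.integral_finsetSum hra]
  simp only [← mul_assoc, intervalIntegral.integral_mul_const]

theorem integral_integral_swap_triangle {G : ℝ → ℝ → ℝ} (hG : Continuous (uncurry G)) {a b : ℝ}
    (hab : a ≤ b) :
    ∫ s in a..b, ∫ z in a..s, G s z = ∫ z in a..b, ∫ s in z..b, G s z := by
  -- `G` cut off outside the triangle `z ≤ s`: both sides are iterated integrals of `H`
  -- over `(a, b]²`.
  set H : ℝ → ℝ → ℝ := fun s z => if z ≤ s then G s z else 0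
  have hH : Integrable (uncurry H)
      ((volume.restrict (Ioc a b)).prod (volume.restrict (Ioc a b))) := by
    rw [Measure.prod_restrict, ← Measure.volume_eq_prod]
    have hset : MeasurableSet {q : ℝ × ℝ | q.2 ≤ q.1} :=
      measurableSet_le measurable_snd measurable_fst
    have : uncurry H = {q : ℝ × ℝ | q.2 ≤ q.1}.indicator (uncurry G) := by
      ext q; simp [H, indicator_apply, uncurry]
    rw [this]
    exact ((hG.continuousOn.integrableOn_compact (isCompact_Icc.prod isCompact_Icc)).mono_set
      (prod_mono Ioc_subset_Icc_self Ioc_subset_Icc_self)).indicator hset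
  have hleft : ∀ s ∈ Ioc a b, ∫ z in Ioc a b, H s z = ∫ z in a..s, G s z := by
    intro s hs
    have : H s = (Iic s).indicator (G s) := by ext z; simp [H, indicator_apply]
    rw [this, setIntegral_indicator measurableSet_Iic, Ioc_inter_Iic, inf_eq_right.2 hs.2,
      intervalIntegral.integral_of_le hs.1.le]
  have hright : ∀ z ∈ Ioc a b, ∫ s in Ioc a b, H s z = ∫ s in z..b, G s z := by
    intro z hz
    have : (fun s => H s z) = (Ici z).indicator (fun s => G s z) := by
      ext s; simp [H, indicator_apply]
    have hIcc : Ioc a b ∩ Ici z = Icc z b := by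
      ext s; simp only [mem_inter_iff, mem_Ioc, mem_Ici, mem_Icc]
      constructor
      · rintro ⟨⟨-, hb⟩, hz⟩; exact ⟨hz, hb⟩
      · rintro ⟨hzs, hb⟩; exact ⟨⟨hz.1.trans_le hzs, hb⟩, hzs⟩
    rw [this, setIntegral_indicator measurableSet_Ici, hIcc, integral_Icc_eq_integral_Ioc,
      intervalIntegral.integral_of_le hz.2]
  rw [intervalIntegral.integral_of_le hab, intervalIntegral.integral_of_le hab,
    ← setIntegral_congr_fun measurableSet_Ioc hleft,
    ← setIntegral_congr_fun measurableSet_Ioc hright]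
  exact integral_integral_swap hH

noncomputable def kernelComp (k l : ℝ → ℝ → ℝ) (t s : ℝ) : ℝ := ∫ z in s..t, k t z * l z s

/-- `iteratedKernel k n` is the paper's `Kₙ₊₁`. -/
noncomputable def iteratedKernel (k : ℝ → ℝ → ℝ) : ℕ → ℝ → ℝ → ℝ
  | 0 => k
  | n + 1 => kernelComp k (iteratedKernel k n)

noncomputable def volterraOp (k : ℝ → ℝ → ℝ) (t₀ : ℝ) (g : ℝ → ℝ) (t : ℝ) : ℝ :=
  ∫ s in t₀..t, k t s * g s

theorem continuous_kernelComp {k l : ℝ → ℝ → ℝ} (hk : Continuous (uncurry k))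
    (hl : Continuous (uncurry l)) : Continuous (uncurry (kernelComp k l)) := by
  have hint : Continuous (uncurry fun (q : ℝ × ℝ) z => k q.1 z * l z q.2) := by
    fun_prop
  have hsplit : uncurry (kernelComp k l) = fun q =>
      (∫ z in (0 : ℝ)..q.1, k q.1 z * l z q.2) - ∫ z in (0 : ℝ)..q.2, k q.1 z * l z q.2 := by
    ext q
    exact (intervalIntegral.integral_interval_sub_left
      ((hint.comp (Continuous.prodMk_right q)).intervalIntegrable _ _)
      ((hint.comp (Continuous.prodMk_right q)).intervalIntegrable _ _)).symm
  rw [hsplit]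
  fun_prop

theorem continuous_iteratedKernel {k : ℝ → ℝ → ℝ} (hk : Continuous (uncurry k)) (n : ℕ) :
    Continuous (uncurry (iteratedKernel k n)) := by
  induction n with
  | zero => exact hk
  | succ n ih => exact continuous_kernelComp hk ih

theorem continuous_volterraOp {k : ℝ → ℝ → ℝ} {g : ℝ → ℝ} (hk : Continuous (uncurry k))
    (hg : Continuous g) (t₀ : ℝ) : Continuous (volterraOp k t₀ g) := by
  unfold volterraOp
  fun_prop

section VolterraOp

variable {k : ℝ → ℝ → ℝ} {t₀ t : ℝ}

theorem volterraOp_volterraOp {l : ℝ → ℝ → ℝ} {g : ℝ → ℝ} (hk : Continuous (k t))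
    (hl : Continuous (uncurry l)) (hg : Continuous g) (ht : t₀ ≤ t) :
    volterraOp k t₀ (volterraOp l t₀ g) t = volterraOp (kernelComp k l) t₀ g t := by
  have hG : Continuous (uncurry fun s z => k t s * (l s z * g z)) := by fun_prop
  calc volterraOp k t₀ (volterraOp l t₀ g) t
      = ∫ s in t₀..t, ∫ z in t₀..s, k t s * (l s z * g z) := by
        simp only [volterraOp, intervalIntegral.integral_const_mul]
    _ = ∫ z in t₀..t, ∫ s in z..t, k t s * (l s z * g z) :=
        integral_integral_swap_triangle hG ht
    _ = volterraOp (kernelComp k l) t₀ g t := by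
        simp only [volterraOp, kernelComp, ← intervalIntegral.integral_mul_const, mul_assoc]

theorem volterraOp_congr {g h : ℝ → ℝ} (ht : t₀ ≤ t) (hgh : EqOn g h (Icc t₀ t)) :
    volterraOp k t₀ g t = volterraOp k t₀ h t :=
  intervalIntegral.integral_congr fun s hs => by
    rw [uIcc_of_le ht] at hs
    simp only [hgh hs]

theorem volterraOp_add {g h : ℝ → ℝ} (hk : Continuous (k t)) (hg : Continuous g)
    (hh : Continuous h) :
    volterraOp k t₀ (g + h) t = volterraOp k t₀ g t + volterraOp k t₀ h t := by
  simp only [volterraOp, Pi.add_apply, mul_add]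
  exact intervalIntegral.integral_add ((hk.mul hg).intervalIntegrable _ _)
    ((hk.mul hh).intervalIntegrable _ _)

theorem volterraOp_const_mul (c : ℝ) (g : ℝ → ℝ) :
    volterraOp k t₀ (fun s => c * g s) t = c * volterraOp k t₀ g t := by
  simp only [volterraOp, mul_left_comm _ c, intervalIntegral.integral_const_mul]

theorem volterraOp_finset_sum {ι : Type*} (S : Finset ι) {g : ι → ℝ → ℝ} (hk : Continuous (k t))
    (hg : ∀ i ∈ S, Continuous (g i)) :
    volterraOp k t₀ (fun s => ∑ i ∈ S, g i s) t = ∑ i ∈ S, volterraOp k t₀ (g i) t := by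
  simp only [volterraOp, Finset.mul_sum]
  exact intervalIntegral.integral_finsetSum fun i hi => ((hk.mul (hg i hi)).intervalIntegrable _ _)

end VolterraOp

noncomputable def neumannSum (k : ℝ → ℝ → ℝ) (lam t₀ : ℝ) (g : ℝ → ℝ) (N : ℕ) (t : ℝ) : ℝ :=
  ∑ n ∈ Finset.range N, lam ^ (n + 1) * volterraOp (iteratedKernel k n) t₀ g t

section Neumann

variable {k : ℝ → ℝ → ℝ} {g x : ℝ → ℝ} {t₀ t lam : ℝ}

theorem continuous_neumannSum (hk : Continuous (uncurry k)) (hg : Continuous g) (N : ℕ) :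
    Continuous (neumannSum k lam t₀ g N) :=
  continuous_finsetSum _ fun n _ =>
    continuous_const.mul (continuous_volterraOp (continuous_iteratedKernel hk n) hg t₀)

theorem neumannSum_succ (hk : Continuous (uncurry k)) (hg : Continuous g) (ht : t₀ ≤ t)
    (N : ℕ) : neumannSum k lam t₀ g (N + 1) t =
      lam * (volterraOp k t₀ g t + volterraOp k t₀ (neumannSum k lam t₀ g N) t) := by
  have hkt := hk.uncurry_left t
  have hV : volterraOp k t₀ (neumannSum k lam t₀ g N) t =
      ∑ n ∈ Finset.range N, lam ^ (n + 1) * volterraOp (iteratedKernel k (n + 1)) t₀ g t := by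
    rw [show neumannSum k lam t₀ g N = fun s => ∑ n ∈ Finset.range N,
        lam ^ (n + 1) * volterraOp (iteratedKernel k n) t₀ g s from rfl,
      volterraOp_finset_sum (g := fun n s => lam ^ (n + 1) * volterraOp (iteratedKernel k n) t₀ g s)
        _ hkt fun n _ => continuous_const.mul
      (continuous_volterraOp (continuous_iteratedKernel hk n) hg t₀)]
    refine Finset.sum_congr rfl fun n _ => ?_
    rw [volterraOp_const_mul, volterraOp_volterraOp hkt (continuous_iteratedKernel hk n) hg ht]
    rfl
  rw [hV, neumannSum, Finset.sum_range_succ', mul_add, Finset.mul_sum, add_comm]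
  congr 1
  · simp only [iteratedKernel, zero_add, pow_one]
  · exact Finset.sum_congr rfl fun n _ => by ring

theorem eq_add_neumannSum_add_remainder (hk : Continuous (uncurry k)) (hg : Continuous g)
    (hx : Continuous x) (hsol : ∀ u ∈ Icc t₀ t, x u = g u + lam * volterraOp k t₀ x u) (N : ℕ) :
    ∀ u ∈ Icc t₀ t, x u = g u + neumannSum k lam t₀ g N u +
      lam ^ (N + 1) * volterraOp (iteratedKernel k N) t₀ x u := by
  induction N with
  | zero => simpa [neumannSum, iteratedKernel] using hsol
  | succ N ih =>
    intro u hu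
    have hku := hk.uncurry_left u
    have hKN := continuous_iteratedKernel hk N
    have hV : volterraOp k t₀ x u = volterraOp k t₀ g u +
        volterraOp k t₀ (neumannSum k lam t₀ g N) u +
        lam ^ (N + 1) * volterraOp (iteratedKernel k (N + 1)) t₀ x u := by
      rw [volterraOp_congr (h := g + neumannSum k lam t₀ g N +
          fun s => lam ^ (N + 1) * volterraOp (iteratedKernel k N) t₀ x s) hu.1
          fun s hs => ih s ⟨hs.1, hs.2.trans hu.2⟩,
        volterraOp_add (h := fun s => lam ^ (N + 1) * volterraOp (iteratedKernel k N) t₀ x s)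
          hku (hg.add (continuous_neumannSum hk hg N))
          (continuous_const.mul (continuous_volterraOp hKN hx t₀)),
        volterraOp_add hku hg (continuous_neumannSum hk hg N), volterraOp_const_mul,
        volterraOp_volterraOp hku hKN hx hu.1]
      rfl
    rw [hsol u hu, hV, neumannSum_succ hk hg hu.1]
    ring

end Neumann

noncomputable def resolventKernel (k : ℝ → ℝ → ℝ) (lam t s : ℝ) : ℝ :=
  ∑' n : ℕ, lam ^ (n + 1) * iteratedKernel k n t s

section Bounds

variable {k : ℝ → ℝ → ℝ} {a b M : ℝ}

theorem exists_abs_le_on_triangle (hk : Continuous (uncurry k)) (a b : ℝ) :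
    ∃ M, ∀ u s, a ≤ s → s ≤ u → u ≤ b → |k u s| ≤ M := by
  obtain ⟨M, hM⟩ := (isCompact_Icc.prod isCompact_Icc : IsCompact (Icc a b ×ˢ Icc a b))
    |>.exists_bound_of_continuousOn hk.continuousOn
  exact ⟨M, fun u s hs hsu hu => hM (u, s) ⟨⟨hs.trans hsu, hu⟩, ⟨hs, hsu.trans hu⟩⟩⟩

theorem abs_iteratedKernel_le (hM : ∀ u s, a ≤ s → s ≤ u → u ≤ b → |k u s| ≤ M) (n : ℕ)
    {u s : ℝ} (hs : a ≤ s) (hsu : s ≤ u) (hu : u ≤ b) :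
    |iteratedKernel k n u s| ≤ M ^ (n + 1) * (u - s) ^ n / n ! := by
  induction n generalizing u with
  | zero => simpa [iteratedKernel] using hM u s hs hsu hu
  | succ n ih =>
    have hM0 : 0 ≤ M := (abs_nonneg _).trans (hM u s hs hsu hu)
    have hbound : ∀ z ∈ Ι s u, ‖k u z * iteratedKernel k n z s‖ ≤
        M * (M ^ (n + 1) * (z - s) ^ n / n !) := by
      intro z hz
      rw [uIoc_of_le hsu] at hz
      rw [Real.norm_eq_abs, abs_mul]
      exact mul_le_mul (hM u z (hs.trans hz.1.le) hz.2 hu) (ih hz.1.le (hz.2.trans hu))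
        (abs_nonneg _) hM0
    have hintegral : ∫ z in s..u, M * (M ^ (n + 1) * (z - s) ^ n / n !) =
        M ^ (n + 2) * (u - s) ^ (n + 1) / (n + 1) ! := by
      simp only [intervalIntegral.integral_const_mul, intervalIntegral.integral_div,
        intervalIntegral.integral_comp_sub_right fun z => z ^ n, sub_self, integral_pow,
        Nat.factorial_succ]
      push_cast
      field_simp
      ring
    calc |iteratedKernel k (n + 1) u s|
        ≤ |∫ z in s..u, M * (M ^ (n + 1) * (z - s) ^ n / n !)| :=
          intervalIntegral.norm_integral_le_abs_of_norm_le
            (ae_restrict_of_forall_mem measurableSet_uIoc hbound)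
            (Continuous.intervalIntegrable (by fun_prop) _ _)
      _ = M ^ (n + 1 + 1) * (u - s) ^ (n + 1) / (n + 1) ! := by
          rw [hintegral, abs_of_nonneg (by have := sub_nonneg.2 hsu; positivity)]

theorem abs_pow_mul_iteratedKernel_le (hM : ∀ u s, a ≤ s → s ≤ u → u ≤ b → |k u s| ≤ M)
    (lam : ℝ) (n : ℕ) {u s : ℝ} (hs : a ≤ s) (hsu : s ≤ u) (hu : u ≤ b) :
    |lam ^ (n + 1) * iteratedKernel k n u s| ≤ |lam| * M * ((|lam| * M * (b - a)) ^ n / n !) := by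
  have hM0 : 0 ≤ M := (abs_nonneg _).trans (hM u s hs hsu hu)
  calc |lam ^ (n + 1) * iteratedKernel k n u s|
      = |lam| ^ (n + 1) * |iteratedKernel k n u s| := by rw [abs_mul, abs_pow]
    _ ≤ |lam| ^ (n + 1) * (M ^ (n + 1) * (b - a) ^ n / n !) := by
        gcongr
        refine (abs_iteratedKernel_le hM n hs hsu hu).trans ?_
        gcongr
    _ = |lam| * M * ((|lam| * M * (b - a)) ^ n / n !) := by rw [mul_pow, mul_pow]; ring

theorem summable_pow_mul_iteratedKernel_bound (lam M c : ℝ) :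
    Summable fun n : ℕ => |lam| * M * ((|lam| * M * c) ^ n / n !) :=
  (Real.summable_pow_div_factorial _).mul_left _

end Bounds

section Resolvent

variable {k : ℝ → ℝ → ℝ} {g x : ℝ → ℝ} {t₀ t M : ℝ}

theorem tendsto_pow_mul_volterraOp_iteratedKernel
    (hM : ∀ u s, t₀ ≤ s → s ≤ u → u ≤ t → |k u s| ≤ M) (hx : ContinuousOn x (Icc t₀ t))
    (lam : ℝ) (ht : t₀ ≤ t) :
    Tendsto (fun N : ℕ => lam ^ (N + 1) * volterraOp (iteratedKernel k N) t₀ x t) atTop (𝓝 0) := by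
  obtain ⟨C, hC⟩ := isCompact_Icc.exists_bound_of_continuousOn hx
  set D := |lam| * M * (t - t₀)
  have hbound : ∀ N : ℕ, ‖lam ^ (N + 1) * volterraOp (iteratedKernel k N) t₀ x t‖ ≤
      |lam| * M * (D ^ N / N !) * C * (t - t₀) := by
    intro N
    rw [volterraOp, ← intervalIntegral.integral_const_mul, ← abs_of_nonneg (sub_nonneg.2 ht)]
    refine intervalIntegral.norm_integral_le_of_norm_le_const fun s hs => ?_
    rw [uIoc_of_le ht] at hs
    rw [← mul_assoc, norm_mul]
    exact mul_le_mul (abs_pow_mul_iteratedKernel_le hM lam N hs.1.le hs.2 le_rfl)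
      (hC s (Ioc_subset_Icc_self hs)) (norm_nonneg _)
      ((abs_nonneg _).trans (abs_pow_mul_iteratedKernel_le hM lam N hs.1.le hs.2 le_rfl))
  refine squeeze_zero_norm hbound ?_
  simpa using (((FloorSemiring.tendsto_pow_div_factorial_atTop D).const_mul (|lam| * M)).mul_const
    C).mul_const (t - t₀)

theorem hasSum_volterraOp_resolventKernel
    (hM : ∀ u s, t₀ ≤ s → s ≤ u → u ≤ t → |k u s| ≤ M) (hk : Continuous (uncurry k))
    (hg : Continuous g) (lam : ℝ) (ht : t₀ ≤ t) :
    HasSum (fun n => lam ^ (n + 1) * volterraOp (iteratedKernel k n) t₀ g t)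
      (volterraOp (resolventKernel k lam) t₀ g t) := by
  obtain ⟨C, hC⟩ := isCompact_Icc.exists_bound_of_continuousOn hg.continuousOn (s := Icc t₀ t)
  set B : ℕ → ℝ := fun n => |lam| * M * ((|lam| * M * (t - t₀)) ^ n / n !)
  have hterm : ∀ n, ∀ s ∈ Ι t₀ t, |lam ^ (n + 1) * iteratedKernel k n t s| ≤ B n := by
    intro n s hs
    rw [uIoc_of_le ht] at hs
    exact abs_pow_mul_iteratedKernel_le hM lam n hs.1.le hs.2 le_rfl
  have hmem : ∀ s ∈ Ι t₀ t, s ∈ Icc t₀ t := fun s hs => by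
    rw [uIoc_of_le ht] at hs
    exact Ioc_subset_Icc_self hs
  simp only [volterraOp, resolventKernel, ← intervalIntegral.integral_const_mul, ← mul_assoc]
  refine intervalIntegral.hasSum_integral_of_dominated_convergence (fun n _ => B n * C)
    (fun n => Continuous.aestronglyMeasurable (by
      have := continuous_iteratedKernel hk n
      fun_prop)) (fun n => ae_of_all _ fun s hs => ?_)
    (ae_of_all _ fun _ _ => (summable_pow_mul_iteratedKernel_bound lam M _).mul_right C)
    intervalIntegrable_const (ae_of_all _ fun s hs => ?_)
  · rw [norm_mul]
    exact mul_le_mul (hterm n s hs) (hC s (hmem s hs))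
      (norm_nonneg _) ((abs_nonneg _).trans (hterm n s hs))
  · exact ((summable_pow_mul_iteratedKernel_bound lam M _).of_norm_bounded
      (hterm · s hs)).hasSum.mul_right (g s)

theorem continuousOn_resolventKernel (hk : Continuous (uncurry k)) (lam : ℝ) :
    ContinuousOn (resolventKernel k lam t) (Icc t₀ t) := by
  obtain ⟨M, hM⟩ := exists_abs_le_on_triangle hk t₀ t
  exact continuousOn_tsum
    (fun n => (continuous_const.mul ((continuous_iteratedKernel hk n).uncurry_left t)).continuousOn)
    (summable_pow_mul_iteratedKernel_bound lam M (t - t₀))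
    fun n s hs => abs_pow_mul_iteratedKernel_le hM lam n hs.1 hs.2 le_rfl

theorem eq_add_volterraOp_resolventKernel {lam : ℝ} (hk : Continuous (uncurry k))
    (hg : Continuous g) (hx : Continuous x) (ht : t₀ ≤ t)
    (hsol : ∀ u ∈ Icc t₀ t, x u = g u + lam * volterraOp k t₀ x u) :
    x t = g t + volterraOp (resolventKernel k lam) t₀ g t := by
  obtain ⟨M, hM⟩ := exists_abs_le_on_triangle hk t₀ t
  have hneumann : Tendsto (fun N => neumannSum k lam t₀ g N t) atTop (𝓝 (x t - g t)) := by
    have hrem := tendsto_pow_mul_volterraOp_iteratedKernel hM hx.continuousOn lam ht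
    rw [← sub_zero (x t - g t)]
    refine (tendsto_const_nhds.sub hrem).congr fun N => ?_
    linarith [eq_add_neumannSum_add_remainder hk hg hx hsol N t ⟨ht, le_rfl⟩]
  have hsum := (hasSum_volterraOp_resolventKernel hM hk hg lam ht).tendsto_sum_nat
  linarith [tendsto_nhds_unique hneumann hsum]

end Resolvent

theorem iteratedKernel_eq_of_eqOn_triangle {k K : ℝ → ℝ → ℝ} {Kn : ℕ → ℝ → ℝ → ℝ} {a b : ℝ}
    (hk : ∀ u s, a ≤ s → s ≤ u → u ≤ b → k u s = K u s) (hKn1 : ∀ u s, Kn 1 u s = K u s)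
    (hKnrec : ∀ n, 2 ≤ n → ∀ u s, Kn n u s = ∫ z in s..u, K u z * Kn (n - 1) z s) (n : ℕ)
    {u s : ℝ} (hs : a ≤ s) (hsu : s ≤ u) (hu : u ≤ b) :
    iteratedKernel k n u s = Kn (n + 1) u s := by
  induction n generalizing u with
  | zero => rw [hKn1, ← hk u s hs hsu hu]; rfl
  | succ n ih =>
    rw [hKnrec (n + 2) (by omega)]
    refine intervalIntegral.integral_congr fun z hz => ?_
    rw [uIcc_of_le hsu] at hz
    simp only [hk u z (hs.trans hz.1) hz.2 hu, ih hz.1 (hz.2.trans hu)]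
    rfl

theorem lvie_solution_reconstruction_from_loads_general
    (t₀ T : ℝ) (m : ℕ)
    (p : Fin (m - 1) → ℝ)
    (f : ℝ → ℝ) (hf : ContinuousOn f (Set.Icc t₀ T))
    (a : Fin (m - 1) → ℝ → ℝ) (ha : ∀ j, ContinuousOn (a j) (Set.Icc t₀ T))
    (K : ℝ → ℝ → ℝ)
    (hK : ContinuousOn (fun q : ℝ × ℝ => K q.1 q.2)
      {q : ℝ × ℝ | t₀ ≤ q.2 ∧ q.2 ≤ q.1 ∧ q.1 ≤ T})
    (lam : ℝ)
    (Kn : ℕ → ℝ → ℝ → ℝ)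
    (hKn1 : ∀ t s, Kn 1 t s = K t s)
    (hKnrec : ∀ n, 2 ≤ n → ∀ t s, Kn n t s = ∫ z in s..t, K t z * Kn (n - 1) z s)
    (R : ℝ → ℝ → ℝ → ℝ)
    (hR : ∀ t s lam', R t s lam' = ∑' n : ℕ, lam' ^ (n + 1) * Kn (n + 1) t s)
    (F : ℝ → ℝ → ℝ)
    (hF : ∀ t lam', F t lam' = f t + ∫ s in t₀..t, R t s lam' * f s)
    (b : Fin (m - 1) → ℝ → ℝ → ℝ)
    (hb : ∀ j t lam', b j t lam' = a j t + ∫ s in t₀..t, R t s lam' * a j s)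
    (x : ℝ → ℝ) (hx : ContinuousOn x (Set.Icc t₀ T))
    (hsol : ∀ t ∈ Set.Icc t₀ T,
      x t + ∑ j, a j t * x (p j) = lam * (∫ s in t₀..t, K t s * x s) + f t) :
    ∀ t ∈ Set.Icc t₀ T, x t = F t lam - ∑ j, b j t lam * x (p j) := by
  intro t ht
  have hsub : Icc t₀ t ⊆ Icc t₀ T := Icc_subset_Icc_right ht.2
  have hIcc : uIcc t₀ t = Icc t₀ t := uIcc_of_le ht.1
  obtain ⟨k, hk, hkK⟩ := exists_continuous_eq_on_triangle hK
  set g := fun s => f s - ∑ j, a j s * x (p j)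
  obtain ⟨G, hGc, hGg⟩ := ContinuousOn.exists_continuous_eqOn (f := g)
    ((hf.sub (continuousOn_finsetSum _ fun j _ => (ha j).mul continuousOn_const)).mono hsub)
    isClosed_Icc
  obtain ⟨X, hXc, hXx⟩ := (hx.mono hsub).exists_continuous_eqOn isClosed_Icc
  have hsolX : ∀ u ∈ Icc t₀ t, X u = G u + lam * volterraOp k t₀ X u := by
    intro u hu
    have hV : volterraOp k t₀ X u = ∫ s in t₀..u, K u s * x s := by
      refine intervalIntegral.integral_congr fun s hs => ?_
      rw [uIcc_of_le hu.1] at hs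
      rw [hkK u s hs.1 hs.2 (hu.2.trans ht.2), hXx ⟨hs.1, hs.2.trans hu.2⟩]
    rw [hXx hu, hGg hu, hV]
    linarith [hsol u (hsub hu)]
  have hR' : EqOn (resolventKernel k lam t) (fun s => R t s lam) (Icc t₀ t) := fun s hs => by
    show _ = R t s lam
    rw [hR]
    exact tsum_congr fun n => by
      rw [iteratedKernel_eq_of_eqOn_triangle hkK hKn1 hKnrec n hs.1 hs.2 ht.2]
  have hRc : ContinuousOn (fun s => R t s lam) (uIcc t₀ t) :=
    hIcc ▸ (continuousOn_resolventKernel hk lam).congr hR'.symm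
  have hVR : volterraOp (resolventKernel k lam) t₀ G t =
      ∫ s in t₀..t, R t s lam * (f s - ∑ j, a j s * x (p j)) :=
    intervalIntegral.integral_congr fun s hs => by
      rw [hIcc] at hs
      simp only [hR' hs, hGg hs, g]
  have key := eq_add_volterraOp_resolventKernel hk hGc hXc ht.1 hsolX
  rw [hXx ⟨ht.1, le_rfl⟩, hGg ⟨ht.1, le_rfl⟩, hVR, integral_mul_sub_sum_mul _ _ hRc
    (hIcc ▸ hf.mono hsub) fun j _ => hIcc ▸ (ha j).mono hsub] at key
  simp only [hF, hb, add_mul, Finset.sum_add_distrib, g] at key ⊢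
  linarith

/-- Any continuous solution of the LVIE is reconstructed from its load vector:
x(t) = F(t,λ) − Σⱼ bⱼ(t,λ) x(tⱼ) on [t₀,T]. -/
theorem lvie_solution_reconstruction_from_loads
    (t₀ T : ℝ) (ht : t₀ < T) (m : ℕ) (hm : 2 ≤ m)
    (p : Fin (m - 1) → ℝ) (hpmono : StrictMono p)
    (hp : ∀ j, t₀ < p j ∧ p j < T)
    (f : ℝ → ℝ) (hf : ContinuousOn f (Set.Icc t₀ T))
    (a : Fin (m - 1) → ℝ → ℝ) (ha : ∀ j, ContinuousOn (a j) (Set.Icc t₀ T))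
    (K : ℝ → ℝ → ℝ)
    (hK : ContinuousOn (fun q : ℝ × ℝ => K q.1 q.2)
      {q : ℝ × ℝ | t₀ ≤ q.2 ∧ q.2 ≤ q.1 ∧ q.1 ≤ T})
    (lam : ℝ)
    (Kn : ℕ → ℝ → ℝ → ℝ)
    (hKn1 : ∀ t s, Kn 1 t s = K t s)
    (hKnrec : ∀ n, 2 ≤ n → ∀ t s, Kn n t s = ∫ z in s..t, K t z * Kn (n - 1) z s)
    (R : ℝ → ℝ → ℝ → ℝ)
    (hR : ∀ t s lam', R t s lam' = ∑' n : ℕ, lam' ^ (n + 1) * Kn (n + 1) t s)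
    (F : ℝ → ℝ → ℝ)
    (hF : ∀ t lam', F t lam' = f t + ∫ s in t₀..t, R t s lam' * f s)
    (b : Fin (m - 1) → ℝ → ℝ → ℝ)
    (hb : ∀ j t lam', b j t lam' = a j t + ∫ s in t₀..t, R t s lam' * a j s)
    (x : ℝ → ℝ) (hx : ContinuousOn x (Set.Icc t₀ T))
    (hsol : ∀ t ∈ Set.Icc t₀ T,
      x t + ∑ j, a j t * x (p j) = lam * (∫ s in t₀..t, K t s * x s) + f t) :
    ∀ t ∈ Set.Icc t₀ T, x t = F t lam - ∑ j, b j t lam * x (p j) :=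
  lvie_solution_reconstruction_from_loads_general t₀ T m p f hf a ha K hK lam Kn hKn1 hKnrec R hR F
    hF b hb x hx hsol
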